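/- arXiv:1910.05861 — 2 statements merged into one kernel-verified Lean document; each statement's English description precedes it below -/
import Mathlib

section
/- Let α, c > 0 be real numbers and m, T ≥ 0 integers. Suppose a sequence (E_j) of nonnegative reals satisfies E_{t+1} ≤ α·(E_{t-m} + E_{t-m+1} + ... + E_t) + c for all integers t ≥ 0, and E_j = 0 for j = -m, ..., 0. Then E_{T+1} ≤ c·(1+α)^T for all integers T ≥ 0. -/
/-! Strong induction on `T`: the window `E_{t-m}, …, E_t` consists of vanishing initial terms and
some of `E_1, …, E_t`, so it is at most `∑_{s<t} c (1+α)^s`, and `α ∑_{s<t} c (1+α)^s + c = c (1+α)^t`. -/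

open Finset

lemma sum_range_shift_le {g : ℕ → ℝ} (hg : ∀ i, 0 ≤ g i) (n t : ℕ) :
    ∑ k ∈ range n, g (t + k) ≤ ∑ i ∈ range n, g i + ∑ i ∈ range t, g (n + i) := by
  have hsplit : ∑ i ∈ range t, g i + ∑ k ∈ range n, g (t + k)
      = ∑ i ∈ range n, g i + ∑ i ∈ range t, g (n + i) := by
    rw [← sum_range_add, ← sum_range_add, add_comm]
  have hhead : 0 ≤ ∑ i ∈ range t, g i := sum_nonneg fun i _ => hg i
  linarith

lemma sum_window_le_sum_range {E : ℤ → ℝ} {m : ℕ} (hE : ∀ j, 0 ≤ E j)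
    (hinit : ∀ j : ℤ, -(m : ℤ) ≤ j → j ≤ 0 → E j = 0) (t : ℕ) :
    ∑ k ∈ range (m + 1), E ((t : ℤ) - m + k) ≤ ∑ s ∈ range t, E ((s : ℤ) + 1) := by
  have hzero : ∑ i ∈ range (m + 1), E ((i : ℤ) - m) = 0 :=
    sum_eq_zero fun i hi => hinit _ (by omega) (by simp only [mem_range] at hi; omega)
  have key := sum_range_shift_le (g := fun i : ℕ => E ((i : ℤ) - m)) (fun i => hE _) (m + 1) t
  simp only [hzero, zero_add, Nat.cast_add, Nat.cast_one] at key
  convert key using 3 with k _ s _ <;> ring_nf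

lemma mul_sum_geom_add (α c : ℝ) (t : ℕ) :
    α * ∑ s ∈ range t, c * (1 + α) ^ s + c = c * (1 + α) ^ t := by
  have hgeom := geom_sum_mul (1 + α) t
  rw [← mul_sum]
  linear_combination c * hgeom

theorem discrete_gronwall_memory_general (α c : ℝ) (hα : 0 < α)
    (m : ℕ) (E : ℤ → ℝ) (hE : ∀ j : ℤ, 0 ≤ E j)
    (hrec : ∀ t : ℕ, E (t + 1) ≤ α * (∑ k ∈ Finset.range (m + 1), E ((t : ℤ) - m + k)) + c)
    (hinit : ∀ j : ℤ, -(m : ℤ) ≤ j → j ≤ 0 → E j = 0) :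
    ∀ T : ℕ, E (T + 1) ≤ c * (1 + α) ^ T := by
  intro T
  induction T using Nat.strong_induction_on with
  | _ t ih =>
    have hwindow : ∑ k ∈ range (m + 1), E ((t : ℤ) - m + k) ≤ ∑ s ∈ range t, c * (1 + α) ^ s :=
      (sum_window_le_sum_range hE hinit t).trans
        (sum_le_sum fun s hs => ih s (mem_range.mp hs))
    calc E (t + 1) ≤ α * ∑ k ∈ range (m + 1), E ((t : ℤ) - m + k) + c := hrec t
      _ ≤ α * ∑ s ∈ range t, c * (1 + α) ^ s + c := by gcongr
      _ = c * (1 + α) ^ t := mul_sum_geom_add α c t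

/-- Discrete Gronwall lemma with memory (Lemma 1). -/
theorem discrete_gronwall_memory (α c : ℝ) (hα : 0 < α) (hc : 0 < c)
    (m : ℕ) (E : ℤ → ℝ) (hE : ∀ j : ℤ, 0 ≤ E j)
    (hrec : ∀ t : ℕ, E (t + 1) ≤ α * (∑ k ∈ Finset.range (m + 1), E ((t : ℤ) - m + k)) + c)
    (hinit : ∀ j : ℤ, -(m : ℤ) ≤ j → j ≤ 0 → E j = 0) :
    ∀ T : ℕ, E (T + 1) ≤ c * (1 + α) ^ T :=
  discrete_gronwall_memory_general α c hα m E hE hrec hinit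
end

section
/- Under the hypotheses of the previous statement (perturbed Euler scheme with Lipschitz constant ℓ, perturbation size ε, time step Δ, equal initial conditions), one has for all T with 2ℓΔ(T+1) ≤ 1 the bound max_{0 ≤ t ≤ T+1} |x̂_t − x_t| ≤ C' ε Δ² (T+1)² with C' = ℓ·e. -/
/-!
Write `q = 2ℓΔ`. By the Lipschitz bounds, the total error `s_t = |x̂_t - x_t| + |ŷ_t - y_t|`
obeys `s_{t+1} ≤ (1 + q) s_t + Δε`, so `q s_t ≤ Δε ((1 + q)^t - 1)`, while the error in the
resolved variable only picks up the coupling term: `a_{t+1} ≤ a_t + (q/2) s_t`. Summing,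
`q a_t ≤ (Δε/2) ((1 + q)^t - 1 - q t)`, and for `q t ≤ 1` the bracket is at most `(q t)^2`
because `(1 + q)^t ≤ exp (q t)` and `exp z - 1 - z ≤ z^2` on `[0, 1]`. Hence
`a_t ≤ ℓ ε Δ² t² ≤ ℓ e ε Δ² (T + 1)²`.
-/

open Real

theorem abs_add_mul_sub_add_mul_le {u v Δ p r K : ℝ} (hΔ : 0 ≤ Δ) (h : |p - r| ≤ K) :
    |(u + Δ * p) - (v + Δ * r)| ≤ |u - v| + Δ * K :=
  calc |(u + Δ * p) - (v + Δ * r)| = |(u - v) + Δ * (p - r)| := by ring_nf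
    _ ≤ |u - v| + Δ * |p - r| := by
      simpa only [abs_mul, abs_of_nonneg hΔ] using abs_add_le (u - v) (Δ * (p - r))
    _ ≤ |u - v| + Δ * K := by gcongr

section DiscreteGronwall

variable {q c : ℝ} (hq : 0 ≤ q)
include hq

theorem mul_le_mul_one_add_pow_sub_one {s : ℕ → ℝ} (hs0 : s 0 = 0)
    (hs : ∀ t, s (t + 1) ≤ (1 + q) * s t + c) (t : ℕ) :
    q * s t ≤ c * ((1 + q) ^ t - 1) := by
  induction t with
  | zero => simp [hs0]
  | succ t ih =>
    calc q * s (t + 1) ≤ (1 + q) * (q * s t) + q * c := by nlinarith [hs t]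
      _ ≤ (1 + q) * (c * ((1 + q) ^ t - 1)) + q * c := by gcongr
      _ = c * ((1 + q) ^ (t + 1) - 1) := by ring

theorem mul_le_half_mul_one_add_pow_sub_one_sub_mul {a s : ℕ → ℝ} (ha0 : a 0 = 0)
    (ha : ∀ t, a (t + 1) ≤ a t + q / 2 * s t) (hs : ∀ t, q * s t ≤ c * ((1 + q) ^ t - 1))
    (t : ℕ) : q * a t ≤ c / 2 * ((1 + q) ^ t - 1 - q * t) := by
  induction t with
  | zero => simp [ha0]
  | succ t ih =>
    calc q * a (t + 1) ≤ q * a t + q / 2 * (q * s t) := by nlinarith [ha t]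
      _ ≤ c / 2 * ((1 + q) ^ t - 1 - q * t) + q / 2 * (c * ((1 + q) ^ t - 1)) :=
        add_le_add ih (mul_le_mul_of_nonneg_left (hs t) (by positivity))
      _ = c / 2 * ((1 + q) ^ (t + 1) - 1 - q * ↑(t + 1)) := by push_cast; ring

theorem one_add_pow_sub_one_sub_mul_le_sq {t : ℕ} (hqt : q * t ≤ 1) :
    (1 + q) ^ t - 1 - q * t ≤ (q * t) ^ 2 := by
  have hpow : (1 + q) ^ t ≤ exp (q * t) :=
    calc (1 + q) ^ t ≤ exp q ^ t := by gcongr; linarith [add_one_le_exp q]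
      _ = exp (q * t) := by rw [← exp_nat_mul, mul_comm]
  have hexp := abs_exp_sub_one_sub_id_le (x := q * t) <| by
    rw [abs_of_nonneg (by positivity)]; exact hqt
  linarith [le_abs_self (exp (q * t) - 1 - q * t)]

end DiscreteGronwall

/-- Deterministic version of Theorem 2's conclusion: O(ε Δ² T²) error for the
resolved variable of a perturbed Euler scheme when 2ℓΔ(T+1) ≤ 1. -/
theorem perturbed_euler_quadratic_bound
    (ℓ Δ ε : ℝ) (hℓ : 0 < ℓ) (hΔ : 0 < Δ) (hε : 0 ≤ ε)
    (f g ghat : ℝ × ℝ → ℝ)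
    (hf : ∀ x x' y y' : ℝ, |f (x, y) - f (x', y')| ≤ ℓ * |x - x'| + ℓ * |y - y'|)
    (hg : ∀ x x' y y' : ℝ, |g (x, y) - g (x', y')| ≤ ℓ * |x - x'| + ℓ * |y - y'|)
    (hghat : ∀ x y : ℝ, |ghat (x, y) - g (x, y)| ≤ ε)
    (x y xh yh : ℕ → ℝ)
    (hx : ∀ t, x (t + 1) = x t + Δ * f (x t, y t))
    (hy : ∀ t, y (t + 1) = y t + Δ * g (x t, y t))
    (hxh : ∀ t, xh (t + 1) = xh t + Δ * f (xh t, yh t))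
    (hyh : ∀ t, yh (t + 1) = yh t + Δ * ghat (xh t, yh t))
    (hx0 : x 0 = xh 0) (hy0 : y 0 = yh 0) :
    ∀ T : ℕ, 2 * ℓ * Δ * (T + 1) ≤ 1 →
      ∀ t ≤ T + 1, |xh t - x t| ≤ (ℓ * Real.exp 1) * ε * Δ ^ 2 * (T + 1) ^ 2 := by
  intro T hT t ht
  set a : ℕ → ℝ := fun t ↦ |xh t - x t|
  set b : ℕ → ℝ := fun t ↦ |yh t - y t|
  have hq : 0 ≤ 2 * ℓ * Δ := by positivity
  have ha (t : ℕ) : a (t + 1) ≤ a t + 2 * ℓ * Δ / 2 * (a t + b t) := by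
    have := abs_add_mul_sub_add_mul_le (u := xh t) (v := x t) hΔ.le
      (hf (xh t) (x t) (yh t) (y t))
    simp only [a, b, hx, hxh]; linarith
  have hb (t : ℕ) : b (t + 1) ≤ b t + Δ * ε + 2 * ℓ * Δ / 2 * (a t + b t) := by
    have := abs_add_mul_sub_add_mul_le (u := yh t) (v := y t) hΔ.le <|
      (abs_sub_le _ (g (xh t, yh t)) _).trans
        (add_le_add (hghat _ _) (hg (xh t) (x t) (yh t) (y t)))
    simp only [a, b, hy, hyh]; linarith
  have hqs := mul_le_mul_one_add_pow_sub_one hq (c := Δ * ε) (s := a + b)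
    (by simp [a, b, hx0, hy0]) (fun t ↦ by simp only [Pi.add_apply]; linarith [ha t, hb t])
  have hqa := mul_le_half_mul_one_add_pow_sub_one_sub_mul hq (by simp [a, hx0]) ha hqs t
  have ht' : (t : ℝ) ≤ T + 1 := by exact_mod_cast ht
  have hsq := one_add_pow_sub_one_sub_mul_le_sq hq (t := t) (by nlinarith)
  have ha_le : a t ≤ ℓ * ε * Δ ^ 2 * t ^ 2 := by
    refine le_of_mul_le_mul_left ?_ (by positivity : 0 < 2 * ℓ * Δ)
    nlinarith [mul_le_mul_of_nonneg_left hsq (by positivity : 0 ≤ Δ * ε / 2)]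
  calc |xh t - x t| = a t := rfl
    _ ≤ ℓ * ε * Δ ^ 2 * (T + 1) ^ 2 := ha_le.trans (by gcongr)
    _ ≤ (ℓ * exp 1) * ε * Δ ^ 2 * (T + 1) ^ 2 := by
      gcongr; exact le_mul_of_one_le_right hℓ.le (one_le_exp zero_le_one)
end
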